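/- arXiv:1301.1074 — 2 statements merged into one kernel-verified Lean document; each statement's English description precedes it below -/
import Mathlib

section
/- Let h be a holomorphic function on the open unit disk, continuous on the closed disk, such that Re(z^{2k} + h(z)) = 0 and Im h(z) = 0 for all z on the unit circle. Then h(z) = −z^{2k}/2 is forced by the boundary conditions on the real part, yet this h fails the boundary condition Im h = 0 on S¹; hence no such h exists. -/
/-!
Since `Im h` vanishes on the circle, the maximum modulus principle applied to `exp (∓ I * h)`
shows that it vanishes on the whole disk; a real-valued holomorphic function is constant by the
open mapping theorem. But no constant `c` satisfies `Re (z ^ (2 * k) + c) = 0` on the circle,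
because `z ^ (2 * k)` takes both values `1` and `-1` there.
-/

open Bornology Complex Metric Set

section MaximumPrinciple

variable {E : Type*} [NormedAddCommGroup E] [NormedSpace ℂ E] [Nontrivial E]
  {f : E → ℂ} {U : Set E}

theorem DiffContOnCl.im_le_of_forall_mem_frontier_im_le (hU : IsBounded U)
    (hf : DiffContOnCl ℂ f U) {C : ℝ} (hC : ∀ z ∈ frontier U, (f z).im ≤ C) {z : E}
    (hz : z ∈ closure U) : (f z).im ≤ C := by
  have hexp : ∀ w, ‖exp (-I * f w)‖ = Real.exp (f w).im := fun w => by simp [norm_exp]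
  have hmax : ‖exp (-I * f z)‖ ≤ Real.exp C :=
    norm_le_of_forall_mem_frontier_norm_le hU
      (differentiable_exp.comp_diffContOnCl (hf.const_smul (-I)))
      (fun w hw => (hexp w).trans_le (Real.exp_le_exp.2 (hC w hw))) hz
  rwa [hexp, Real.exp_le_exp] at hmax

theorem DiffContOnCl.im_eq_of_forall_mem_frontier_im_eq (hU : IsBounded U)
    (hf : DiffContOnCl ℂ f U) {c : ℝ} (hc : ∀ z ∈ frontier U, (f z).im = c) {z : E}
    (hz : z ∈ closure U) : (f z).im = c := by
  have hle := hf.im_le_of_forall_mem_frontier_im_le hU (fun w hw => (hc w hw).le) hz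
  have hge := hf.neg.im_le_of_forall_mem_frontier_im_le hU (C := -c)
    (fun w hw => by simp [hc w hw]) hz
  simp only [Pi.neg_apply, neg_im] at hge
  linarith

end MaximumPrinciple

theorem DiffContOnCl.exists_eqOn_closure_const_of_forall_mem_frontier_im_eq {f : ℂ → ℂ}
    {U : Set ℂ} (hU : IsBounded U) (hUo : IsOpen U) (hUc : IsConnected U)
    (hf : DiffContOnCl ℂ f U) {c₀ : ℝ} (hc₀ : ∀ z ∈ frontier U, (f z).im = c₀) :
    ∃ c, EqOn f (fun _ => c) (closure U) := by
  obtain ⟨c, hc⟩ := (hf.differentiableOn.analyticOnNhd hUo).eq_const_of_im_eq_const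
    (fun z hz => hf.im_eq_of_forall_mem_frontier_im_eq hU hc₀ (subset_closure hz)) hUo hUc
  exact ⟨c, EqOn.of_subset_closure hc hf.continuousOn continuousOn_const subset_closure
    subset_rfl⟩

theorem Complex.exists_norm_eq_one_pow_eq_neg_one {n : ℕ} (hn : 0 < n) :
    ∃ w : ℂ, ‖w‖ = 1 ∧ w ^ n = -1 := by
  obtain ⟨w, hw⟩ := IsAlgClosed.exists_pow_nat_eq (-1 : ℂ) hn
  refine ⟨w, ?_, hw⟩
  rw [← pow_eq_one_iff_of_nonneg (norm_nonneg w) hn.ne', ← norm_pow, hw, norm_neg, norm_one]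

theorem stmt12 (k : ℕ) (hk : 0 < k) (h : ℂ → ℂ)
    (hcont : ContinuousOn h (Metric.closedBall (0 : ℂ) 1))
    (hdiff : DifferentiableOn ℂ h (Metric.ball (0 : ℂ) 1))
    (hbd : ∀ z ∈ Metric.sphere (0 : ℂ) 1, (z ^ (2 * k) + h z).re = 0 ∧ (h z).im = 0) :
    False := by
  have hh : DiffContOnCl ℂ h (ball 0 1) :=
    ⟨hdiff, by rwa [closure_ball (0 : ℂ) one_ne_zero]⟩
  obtain ⟨c, hc⟩ := hh.exists_eqOn_closure_const_of_forall_mem_frontier_im_eq isBounded_ball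
    isOpen_ball (isConnected_ball one_pos) (fun z hz => (hbd z (frontier_ball_subset_sphere hz)).2)
  have hsphere : ∀ z ∈ sphere (0 : ℂ) 1, (z ^ (2 * k)).re + c.re = 0 := fun z hz => by
    have hre := (hbd z hz).1
    rwa [hc (closure_ball (0 : ℂ) one_ne_zero ▸ sphere_subset_closedBall hz), add_re] at hre
  obtain ⟨w, hw, hw2k⟩ := exists_norm_eq_one_pow_eq_neg_one (Nat.mul_pos two_pos hk)
  have hone := hsphere 1 (by simp)
  have hroot := hsphere w (by simpa using hw)
  simp only [one_pow, one_re, hw2k, neg_re] at hone hroot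
  linarith
end

section
/- Let c : S¹ → S¹ be the antipodal involution and let V_± → S¹ × S¹ be the real bundle pairs over (S¹ × S¹, id × c) given by (I × S¹ × ℂ)/∼ with (0,z,v) ∼ (1,z,±v) and conjugation induced by the standard conjugation on ℂ. Then the quotient real bundle V₊/ℤ₂ over S¹ × ℝP¹ splits as τ ⊕ γ₂ and V₋/ℤ₂ splits as γ₁ ⊕ (γ₁ ⊗ γ₂), where τ is trivial, γ₁ is the pull-back of the Möbius bundle from the first factor, and γ₂ from the second. -/
/-!
STATEMENT 19 (from the proof of Lemma 2.5). Let `c : S¹ → S¹` be the antipodal involution and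
`V_± → S¹ × S¹` the real bundle pairs over `(S¹ × S¹, id × c)` given by `(I × S¹ × ℂ)/∼` with
`(0,z,v) ∼ (1,z,±v)` and conjugation induced by the standard conjugation of `ℂ` (covering
`id × c`).  Then the quotient real bundle `V₊/ℤ₂` over `S¹ × ℝP¹` splits as `τ ⊕ γ₂` and
`V₋/ℤ₂` splits as `γ₁ ⊕ (γ₁ ⊗ γ₂)`, where `τ` is the trivial line bundle and `γ₁`, `γ₂` are
the pull-backs of the Möbius (tautological) line bundle from the two factors.

Everything is modeled on the universal cover `ℝ²` of the torus: the second circle is `ℝ/ℤ`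
(`z = e^{2πit}`, the antipode `c` being `t ↦ t + 1/2`), so that the base
`S¹ × ℝP¹ = ℝ²/(s ∼ s+1, t ∼ t+1/2)`.  The quotient bundle `V_±/ℤ₂` is the quotient of
`ℝ × ℝ × ℂ` by the clutching relation `(s,t,v) ∼ (s+1,t,±v)` of `V_±`, the fiber periodicity
`(s,t,v) ∼ (s,t+1,v)`, and the conjugation relation `(s,t,v) ∼ (s,t+1/2, v̄)`.  A real line
bundle over `S¹ × ℝP¹` with holonomies `α, β ∈ {±1}` around the two basic loops is the
quotient `L(α,β)` of `ℝ × ℝ × ℝ` by `(s,t,v) ∼ (s+1,t,αv)` and `(s,t,v) ∼ (s,t+1/2,βv)`; thus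
`τ = L(1,1)`, `γ₁ = L(-1,1)`, `γ₂ = L(1,-1)`, `γ₁ ⊗ γ₂ = L(-1,-1)`, and the direct sum
`L(α,β) ⊕ L(α',β')` is the analogous rank 2 quotient `LL(α,β,α',β')` with fiber `ℝ²`.
"Splits as" means: there is a homeomorphism of total spaces commuting with the projections to
the base and linear on each fiber. -/

noncomputable section

/-- the base `S¹ × ℝP¹ = ℝ²/(s ∼ s+1, t ∼ t+1/2)` -/
def BaseRel : (ℝ × ℝ) → (ℝ × ℝ) → Prop := fun p q =>
  q = (p.1 + 1, p.2) ∨ q = (p.1, p.2 + 1 / 2)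

/-- the base space `S¹ × ℝP¹` -/
def Base : Type := Quot BaseRel

instance : TopologicalSpace Base := instTopologicalSpaceQuot

lemma base_shift_one (s t : ℝ) :
    Quot.mk BaseRel (s, t) = Quot.mk BaseRel (s, t + 1) := by
  have a1 : Quot.mk BaseRel (s, t) = Quot.mk BaseRel (s, t + 1 / 2) :=
    Quot.sound (Or.inr rfl)
  have a2 : Quot.mk BaseRel (s, t + 1 / 2) = Quot.mk BaseRel (s, t + 1 / 2 + 1 / 2) :=
    Quot.sound (Or.inr rfl)
  rw [a1, a2]
  congr 2
  ring

/-- total space of the quotient bundle `V_ε/ℤ₂` (`ε = 1` for `V₊`, `ε = -1` for `V₋`):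
the quotient of `ℝ × ℝ × ℂ` by the clutching relation of `V_ε`, the periodicity in the second
circle direction, and the conjugation relation covering the antipodal map -/
def VQRel (ε : ℝ) : (ℝ × ℝ × ℂ) → (ℝ × ℝ × ℂ) → Prop := fun p q =>
  q = (p.1 + 1, p.2.1, (ε : ℂ) * p.2.2) ∨
  q = (p.1, p.2.1 + 1, p.2.2) ∨
  q = (p.1, p.2.1 + 1 / 2, (starRingEnd ℂ) p.2.2)

/-- the total space of `V_ε/ℤ₂` -/
def VQ (ε : ℝ) : Type := Quot (VQRel ε)

instance (ε : ℝ) : TopologicalSpace (VQ ε) := instTopologicalSpaceQuot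

/-- its projection to `S¹ × ℝP¹` -/
def VQproj (ε : ℝ) : VQ ε → Base :=
  Quot.lift (fun p => Quot.mk BaseRel (p.1, p.2.1)) (by
    rintro p q (h | h | h) <;> subst h
    · exact Quot.sound (Or.inl rfl)
    · exact base_shift_one p.1 p.2.1
    · exact Quot.sound (Or.inr rfl))

/-- total space of the sum of line bundles `L(α,β) ⊕ L(α',β')` over `S¹ × ℝP¹`, where `α, α'`
are the holonomies around the `S¹`-factor loop and `β, β'` those around the `ℝP¹`-factor
loop; `τ ⊕ γ₂ = LL 1 1 1 (-1)` and `γ₁ ⊕ (γ₁ ⊗ γ₂) = LL (-1) 1 (-1) (-1)` -/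
def LLRel (α β α' β' : ℝ) : (ℝ × ℝ × (ℝ × ℝ)) → (ℝ × ℝ × (ℝ × ℝ)) → Prop := fun p q =>
  q = (p.1 + 1, p.2.1, (α * p.2.2.1, α' * p.2.2.2)) ∨
  q = (p.1, p.2.1 + 1 / 2, (β * p.2.2.1, β' * p.2.2.2))

/-- the total space of `L(α,β) ⊕ L(α',β')` -/
def LL (α β α' β' : ℝ) : Type := Quot (LLRel α β α' β')

instance (α β α' β' : ℝ) : TopologicalSpace (LL α β α' β') := instTopologicalSpaceQuot

/-- its projection to `S¹ × ℝP¹` -/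
def LLproj (α β α' β' : ℝ) : LL α β α' β' → Base :=
  Quot.lift (fun p => Quot.mk BaseRel (p.1, p.2.1)) (by
    rintro p q (h | h) <;> subst h
    · exact Quot.sound (Or.inl rfl)
    · exact Quot.sound (Or.inr rfl))

/-- `e` is an isomorphism of real vector bundles over `S¹ × ℝP¹`: a homeomorphism of total
spaces commuting with the projections and linear on the fibers -/
def IsBundleIso (ε α β α' β' : ℝ) (e : VQ ε ≃ₜ LL α β α' β') : Prop :=
  (∀ x : VQ ε, LLproj α β α' β' (e x) = VQproj ε x) ∧
  ∀ s t : ℝ, ∃ g : ℂ →ₗ[ℝ] ℝ × ℝ,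
    Function.Bijective g ∧
    ∀ v : ℂ, e (Quot.mk (VQRel ε) (s, t, v)) = Quot.mk (LLRel α β α' β') (s, t, g v)

/-!
Split each complex fibre into its real and imaginary parts. Multiplication by the real clutching
sign `ε` acts on both parts alike, giving holonomy `ε` around the `S¹` loop for each summand,
while the conjugation covering the antipode fixes `ℝ ⊂ ℂ` and negates `iℝ`, giving holonomies
`1` and `-1` around the `ℝP¹` loop. Fibre periodicity `t ∼ t + 1` is then automatic, being the
square of the `ℝP¹` relation.
-/

def Homeomorph.quotCongrOfCompat {X Y : Type*} [TopologicalSpace X] [TopologicalSpace Y]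
    {r : X → X → Prop} {s : Y → Y → Prop} (f : X ≃ₜ Y)
    (hf : ∀ a b, r a b → Quot.mk s (f a) = Quot.mk s (f b))
    (hg : ∀ a b, s a b → Quot.mk r (f.symm a) = Quot.mk r (f.symm b)) :
    Quot r ≃ₜ Quot s where
  toFun := Quot.lift (fun x => Quot.mk s (f x)) hf
  invFun := Quot.lift (fun y => Quot.mk r (f.symm y)) hg
  left_inv := Quot.ind fun x => congrArg (Quot.mk r) (f.symm_apply_apply x)
  right_inv := Quot.ind fun y => congrArg (Quot.mk s) (f.apply_symm_apply y)
  continuous_toFun := continuous_quot_lift hf (continuous_quot_mk.comp f.continuous)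
  continuous_invFun := continuous_quot_lift hg (continuous_quot_mk.comp f.symm.continuous)

lemma LL.mk_add_one {α β α' β' : ℝ} (hβ : β * β = 1) (hβ' : β' * β' = 1)
    (s t : ℝ) (w : ℝ × ℝ) :
    Quot.mk (LLRel α β α' β') (s, t + 1, w) = Quot.mk (LLRel α β α' β') (s, t, w) := by
  have h₁ : Quot.mk (LLRel α β α' β') (s, t, w) =
      Quot.mk (LLRel α β α' β') (s, t + 1 / 2, (β * w.1, β' * w.2)) :=
    Quot.sound (Or.inr rfl)
  have h₂ : Quot.mk (LLRel α β α' β') (s, t + 1 / 2, (β * w.1, β' * w.2)) =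
      Quot.mk (LLRel α β α' β') (s, t + 1 / 2 + 1 / 2, (β * (β * w.1), β' * (β' * w.2))) :=
    Quot.sound (Or.inr rfl)
  rw [h₁, h₂, ← mul_assoc, ← mul_assoc, hβ, hβ', one_mul, one_mul, add_assoc]
  norm_num

def reImHomeomorph : ℝ × ℝ × ℂ ≃ₜ ℝ × ℝ × (ℝ × ℝ) :=
  (Homeomorph.refl ℝ).prodCongr
    ((Homeomorph.refl ℝ).prodCongr Complex.equivRealProdCLM.toHomeomorph)

variable (ε : ℝ)

lemma reImHomeomorph_compat (p q : ℝ × ℝ × ℂ) (h : VQRel ε p q) :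
    Quot.mk (LLRel ε 1 ε (-1)) (reImHomeomorph p) =
      Quot.mk (LLRel ε 1 ε (-1)) (reImHomeomorph q) := by
  rcases h with rfl | rfl | rfl
  · refine Quot.sound (Or.inl ?_)
    simp [reImHomeomorph]
  · exact (LL.mk_add_one (by norm_num) (by norm_num) _ _ _).symm
  · refine Quot.sound (Or.inr ?_)
    simp [reImHomeomorph]

lemma reImHomeomorph_symm_compat (p q : ℝ × ℝ × (ℝ × ℝ)) (h : LLRel ε 1 ε (-1) p q) :
    Quot.mk (VQRel ε) (reImHomeomorph.symm p) = Quot.mk (VQRel ε) (reImHomeomorph.symm q) := by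
  rcases h with rfl | rfl
  · refine Quot.sound (Or.inl ?_)
    ext <;> simp [reImHomeomorph, Complex.equivRealProdCLM_symm_apply, mul_add, mul_assoc]
  · refine Quot.sound (Or.inr (Or.inr ?_))
    ext <;> simp [reImHomeomorph, Complex.equivRealProdCLM_symm_apply]

def splitVQ : VQ ε ≃ₜ LL ε 1 ε (-1) :=
  reImHomeomorph.quotCongrOfCompat (reImHomeomorph_compat ε) (reImHomeomorph_symm_compat ε)

lemma isBundleIso_splitVQ : IsBundleIso ε ε 1 ε (-1) (splitVQ ε) :=
  ⟨Quot.ind fun _ => rfl, fun _ _ =>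
    ⟨Complex.equivRealProdLm.toLinearMap, Complex.equivRealProdLm.bijective, fun _ => rfl⟩⟩

/-- **Splitting of the quotient bundles `V_±/ℤ₂`** (proof of Lemma 2.5):
`V₊/ℤ₂ ≅ τ ⊕ γ₂` and `V₋/ℤ₂ ≅ γ₁ ⊕ (γ₁ ⊗ γ₂)` as real vector bundles over `S¹ × ℝP¹`. -/
theorem stmt19 :
    (∃ e : VQ 1 ≃ₜ LL 1 1 1 (-1), IsBundleIso 1 1 1 1 (-1) e) ∧
    (∃ e : VQ (-1) ≃ₜ LL (-1) 1 (-1) (-1), IsBundleIso (-1) (-1) 1 (-1) (-1) e) :=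
  ⟨⟨splitVQ 1, isBundleIso_splitVQ 1⟩, ⟨splitVQ (-1), isBundleIso_splitVQ (-1)⟩⟩

end
end
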